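/- Fix a real number α, a real number α₀ > 0, a point x₀ ∈ ℝⁿ and s > 0. Then there exists a constant c > 0 such that u(x) = c·(s² − |x−x₀|²)^{1−n/2} is a positive k-admissible solution on B_s(x₀) of the equation σ_k((2/(n−2))u^{−(n+2)/(n−2)}W[u]) + α·σ_{k−1}((2/(n−2))u^{−(n+2)/(n−2)}W[u]) = α₀, with u(x) → ∞ as x → ∂B_s(x₀); and there exists c > 0 such that v(x) = c·(|x−x₀|² − s²)^{1−n/2} is a positive k-admissible solution of the same equation on ℝⁿ ∖ B̄_s(x₀) with v(x) → ∞ as x → ∂B_s(x₀). -/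

import Mathlib

open scoped BigOperators
open Metric Filter

noncomputable section

/-- Euclidean space ℝⁿ. -/
abbrev Eucl (n : ℕ) : Type := EuclideanSpace ℝ (Fin n)

/-- First partial derivative `∂ᵢ u (x)`. -/
def pd (n : ℕ) (u : Eucl n → ℝ) (x : Eucl n) (i : Fin n) : ℝ :=
  fderiv ℝ u x (EuclideanSpace.single i (1 : ℝ))

/-- Second partial derivative `∂ᵢ∂ⱼ u (x)`. -/
def pd2 (n : ℕ) (u : Eucl n → ℝ) (x : Eucl n) (i j : Fin n) : ℝ :=
  fderiv ℝ (fun y => pd n u y j) x (EuclideanSpace.single i (1 : ℝ))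

/-- The matrix `W[u]` with entries
`W_ij[u] = (n−2)∂ᵢ∂ⱼu − (n/u)∂ᵢu ∂ⱼu + (Δu + |∇u|²/u) δᵢⱼ`. -/
def Wmat (n : ℕ) (u : Eucl n → ℝ) (x : Eucl n) : Matrix (Fin n) (Fin n) ℝ :=
  fun i j =>
    ((n : ℝ) - 2) * pd2 n u x i j
      - ((n : ℝ) / u x) * pd n u x i * pd n u x j
      + ((∑ l, pd2 n u x l l) + (∑ l, (pd n u x l) ^ 2) / u x) *
          (if i = j then (1 : ℝ) else 0)

/-- kth elementary symmetric polynomial of a vector in ℝⁿ. -/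
def esymm (n : ℕ) (k : ℕ) (v : Fin n → ℝ) : ℝ :=
  ∑ s ∈ Finset.powersetCard k (Finset.univ : Finset (Fin n)), ∏ i ∈ s, v i

/-- `σ_k(A) := σ_k(λ(A))`, the kth elementary symmetric function of the eigenvalues
of a symmetric matrix (junk value `0` for non-symmetric matrices). -/
def sigmaM (n : ℕ) (k : ℕ) (A : Matrix (Fin n) (Fin n) ℝ) : ℝ :=
  letI := Classical.propDecidable A.IsHermitian
  if h : A.IsHermitian then esymm n k h.eigenvalues else 0

/-- `λ(A) ∈ Γ_k`, i.e. `σ_j(λ(A)) > 0` for `j = 1, …, k`. -/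
def inGammaM (n k : ℕ) (A : Matrix (Fin n) (Fin n) ℝ) : Prop :=
  ∀ j : ℕ, 1 ≤ j → j ≤ k → 0 < sigmaM n j A

/-- `v ∈ Γ_k` for vectors. -/
def inGammaV (n k : ℕ) (v : Fin n → ℝ) : Prop :=
  ∀ j : ℕ, 1 ≤ j → j ≤ k → 0 < esymm n j v

/-- The Garding cone `Γ_k` as a subset of ℝⁿ. -/
def GammaSet (n k : ℕ) : Set (Fin n → ℝ) := {v | inGammaV n k v}

/-- k-admissibility of a function on a set. -/
def Admissible (n k : ℕ) (s : Set (Eucl n)) (u : Eucl n → ℝ) : Prop :=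
  ∀ x ∈ s, inGammaM n k (Wmat n u x)

/-- Equation (*): `σ_k^{1/k}(W[u]) = ((n−2)/2) u^{(n+2)/(n−2)}` at a point. -/
def EqStar (n k : ℕ) (u : Eucl n → ℝ) (x : Eucl n) : Prop :=
  (sigmaM n k (Wmat n u x)) ^ ((1 : ℝ) / k)
    = (((n : ℝ) - 2) / 2) * (u x) ^ (((n : ℝ) + 2) / ((n : ℝ) - 2))

/-- `S` is a (nonempty) compact smooth embedded submanifold of ℝⁿ of codimension `m`:
locally a regular level set of a smooth submersion. -/
def IsSmoothCompactSubmanifold (n m : ℕ) (S : Set (Eucl n)) : Prop :=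
  IsCompact S ∧ S.Nonempty ∧
    ∀ x ∈ S, ∃ U : Set (Eucl n), IsOpen U ∧ x ∈ U ∧
      ∃ φ : Eucl n → EuclideanSpace ℝ (Fin m),
        ContDiffOn ℝ (⊤ : ℕ∞) φ U ∧
        (∀ y ∈ U, Function.Surjective (fderiv ℝ φ y)) ∧
        S ∩ U = {y ∈ U | φ y = 0}

/-- `u(x) → ∞` as `x → ∂Ω`. -/
def BlowsUpAtBoundary (n : ℕ) (Ω : Set (Eucl n)) (u : Eucl n → ℝ) : Prop :=
  ∀ C : ℝ, ∃ δ > (0 : ℝ), ∀ x ∈ Ω, Metric.infDist x (frontier Ω) < δ → C < u x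

/-- `ρ(x)^{n/2−1} u(x) → L` as `x → ∂Ω`, where `ρ(x) = dist(x, ∂Ω)`. -/
def BoundaryRate (n : ℕ) (Ω : Set (Eucl n)) (u : Eucl n → ℝ) (L : ℝ) : Prop :=
  ∀ ε > (0 : ℝ), ∃ δ > (0 : ℝ), ∀ x ∈ Ω, Metric.infDist x (frontier Ω) < δ →
    |(Metric.infDist x (frontier Ω)) ^ ((n : ℝ) / 2 - 1) * u x - L| < ε

/-- `((n−1)·binom(n,k)^{1/k})^{(n−2)/4}`. -/
def growthConst (n k : ℕ) : ℝ :=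
  (((n : ℝ) - 1) * ((n.choose k : ℝ) ^ ((1 : ℝ) / k))) ^ (((n : ℝ) - 2) / 4)

/-- `(4(n−1)·binom(n,k)^{1/k}·s²)^{(n−2)/4}`. -/
def ballConst (n k : ℕ) (s : ℝ) : ℝ :=
  (4 * ((n : ℝ) - 1) * ((n.choose k : ℝ) ^ ((1 : ℝ) / k)) * s ^ 2) ^ (((n : ℝ) - 2) / 4)

/-- The vector `v_m` whose first `n−m+1` coordinates equal `n−m` and whose
last `m−1` coordinates equal `2−m`. -/
def vvec (n m : ℕ) : Fin n → ℝ :=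
  fun i => if (i : ℕ) < n - m + 1 then (n : ℝ) - (m : ℝ) else 2 - (m : ℝ)

/-- `(2/(n−2)) u^{−(n+2)/(n−2)} W[u]`. -/
def Wscaled (n : ℕ) (u : Eucl n → ℝ) (x : Eucl n) : Matrix (Fin n) (Fin n) ℝ :=
  ((2 / ((n : ℝ) - 2)) * (u x) ^ (-(((n : ℝ) + 2) / ((n : ℝ) - 2)))) • Wmat n u x

/-- Equation (**): `σ_k((2/(n−2))u^{−(n+2)/(n−2)}W[u]) + α σ_{k−1}(…) = α₀` at a point. -/
def EqGen (n k : ℕ) (α α₀ : Eucl n → ℝ) (u : Eucl n → ℝ) (x : Eucl n) : Prop :=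
  sigmaM n k (Wscaled n u x) + α x * sigmaM n (k - 1) (Wscaled n u x) = α₀ x

/-- Subsolution of (*) on a set. -/
def IsSubsolutionStar (n k : ℕ) (s : Set (Eucl n)) (u : Eucl n → ℝ) : Prop :=
  ∀ x ∈ s, inGammaM n k (Wmat n u x) ∧
    (((n : ℝ) - 2) / 2) * (u x) ^ (((n : ℝ) + 2) / ((n : ℝ) - 2))
      ≤ (sigmaM n k (Wmat n u x)) ^ ((1 : ℝ) / k)

/-- Supersolution of (*) on a set. -/
def IsSupersolutionStar (n k : ℕ) (s : Set (Eucl n)) (u : Eucl n → ℝ) : Prop :=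
  ∀ x ∈ s, ¬ inGammaM n k (Wmat n u x) ∨
    (sigmaM n k (Wmat n u x)) ^ ((1 : ℝ) / k)
      ≤ (((n : ℝ) - 2) / 2) * (u x) ^ (((n : ℝ) + 2) / ((n : ℝ) - 2))

/-- The matrix `𝒲[v] = ∇²v − ∇v⊗∇v + (Δv/(n−2) + |∇v|²)·I`. -/
def calW (n : ℕ) (v : Eucl n → ℝ) (x : Eucl n) : Matrix (Fin n) (Fin n) ℝ :=
  fun i j =>
    pd2 n v x i j - pd n v x i * pd n v x j
      + ((∑ l, pd2 n v x l l) / ((n : ℝ) - 2) + ∑ l, (pd n v x l) ^ 2) *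
          (if i = j then (1 : ℝ) else 0)

/-- Equation (***): `σ_k((n−2)e^{−2v}𝒲[v]) + α σ_{k−1}((n−2)e^{−2v}𝒲[v]) = α₀` at a point. -/
def EqTriple (n k : ℕ) (α α₀ v : Eucl n → ℝ) (x : Eucl n) : Prop :=
  sigmaM n k ((((n : ℝ) - 2) * Real.exp (-2 * v x)) • calW n v x)
    + α x * sigmaM n (k - 1) ((((n : ℝ) - 2) * Real.exp (-2 * v x)) • calW n v x)
    = α₀ x

/-- The operator `G[v] = σ_k(𝒲[v])/σ_{k−1}(𝒲[v]) − (α₀ e^{2kv}/(n−2)^k)·(1/σ_{k−1}(𝒲[v]))`. -/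
def Gop (n k : ℕ) (α₀ : Eucl n → ℝ) (v : Eucl n → ℝ) (x : Eucl n) : ℝ :=
  sigmaM n k (calW n v x) / sigmaM n (k - 1) (calW n v x)
    - (α₀ x * Real.exp (2 * (k : ℝ) * v x) / ((n : ℝ) - 2) ^ k)
        * (1 / sigmaM n (k - 1) (calW n v x))

/-! The profile `u = c (ε |x - x₀|² + t) ^ (1 - n/2)` is the conformal factor of a round
metric, so `W[u]` is a multiple of the identity. For any radial `u = g(|x - x₀|²)`, `W[u]` is a
combination of `(x - x₀) ⊗ (x - x₀)` and `I`; for the power `p = 1 - n/2` the first coefficient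
vanishes since `(n - 2)(p - 1) = n p`. The rescaled matrix is then `μ I` with
`μ = 4 (n - 1)(-ε t) c ^ (-4/(n-2))`, so admissibility is automatic and the equation reduces to
`binom(n,k) μ^k + α binom(n,k-1) μ^(k-1) = α₀`, which has a positive root by the intermediate
value theorem; `c` is chosen to produce that root. Blow-up at the sphere comes from
`1 - n/2 < 0`. -/

open scoped Topology

section Radial

variable {n : ℕ} {g g' g'' : ℝ → ℝ} {x₀ x : Eucl n}

lemma hasFDerivAt_comp_norm_sub_sq {d : ℝ} (hg : HasDerivAt g d (‖x - x₀‖ ^ 2)) :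
    HasFDerivAt (fun y : Eucl n => g (‖y - x₀‖ ^ 2))
      (d • 2 • innerSL ℝ (x - x₀)) x := by
  have h := ((hasFDerivAt_id x).sub_const x₀).norm_sq
  simp only [ContinuousLinearMap.comp_id] at h
  exact hg.comp_hasFDerivAt x h

lemma pd_comp_norm_sub_sq {d : ℝ} (hg : HasDerivAt g d (‖x - x₀‖ ^ 2)) (j : Fin n) :
    pd n (fun y => g (‖y - x₀‖ ^ 2)) x j = 2 * d * (x j - x₀ j) := by
  rw [pd, (hasFDerivAt_comp_norm_sub_sq hg).fderiv]
  simp [EuclideanSpace.inner_single_right]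
  ring

lemma pd2_comp_norm_sub_sq (hg : ∀ᶠ r in 𝓝 (‖x - x₀‖ ^ 2), HasDerivAt g (g' r) r)
    (hg' : HasDerivAt g' (g'' (‖x - x₀‖ ^ 2)) (‖x - x₀‖ ^ 2)) (i j : Fin n) :
    pd2 n (fun y => g (‖y - x₀‖ ^ 2)) x i j
      = 4 * g'' (‖x - x₀‖ ^ 2) * (x i - x₀ i) * (x j - x₀ j)
        + 2 * g' (‖x - x₀‖ ^ 2) * (if i = j then 1 else 0) := by
  have hq : Continuous fun y : Eucl n => ‖y - x₀‖ ^ 2 := by fun_prop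
  have hpd : (fun y => pd n (fun y => g (‖y - x₀‖ ^ 2)) y j)
      =ᶠ[𝓝 x] fun y => 2 * (g' (‖y - x₀‖ ^ 2) * (y j - x₀ j)) := by
    filter_upwards [hq.continuousAt.eventually hg] with y hy
    rw [pd_comp_norm_sub_sq hy]; ring
  have hcoord : HasFDerivAt (fun y : Eucl n => y j - x₀ j)
      (innerSL ℝ (EuclideanSpace.single j (1 : ℝ))) x := by
    simpa [EuclideanSpace.inner_single_left] using
      ((innerSL ℝ (EuclideanSpace.single j (1 : ℝ))).hasFDerivAt (x := x)).sub_const (x₀ j)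
  have hderiv : HasFDerivAt (fun y : Eucl n => 2 * (g' (‖y - x₀‖ ^ 2) * (y j - x₀ j))) _ x :=
    ((hasFDerivAt_comp_norm_sub_sq hg').mul hcoord).const_mul 2
  rw [pd2, hpd.fderiv_eq, hderiv.fderiv]
  simp [EuclideanSpace.inner_single_right]
  split_ifs <;> simp_all <;> ring

lemma sum_sub_sq_eq_norm_sq (x₀ x : Eucl n) : ∑ l, (x l - x₀ l) ^ 2 = ‖x - x₀‖ ^ 2 := by
  simp [EuclideanSpace.norm_sq_eq]

lemma Wmat_comp_norm_sub_sq (hg : ∀ᶠ r in 𝓝 (‖x - x₀‖ ^ 2), HasDerivAt g (g' r) r)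
    (hg' : HasDerivAt g' (g'' (‖x - x₀‖ ^ 2)) (‖x - x₀‖ ^ 2)) (i j : Fin n) :
    Wmat n (fun y => g (‖y - x₀‖ ^ 2)) x i j
      = 4 * ((n - 2) * g'' (‖x - x₀‖ ^ 2) - n * g' (‖x - x₀‖ ^ 2) ^ 2 / g (‖x - x₀‖ ^ 2))
          * (x i - x₀ i) * (x j - x₀ j)
        + (4 * (n - 1) * g' (‖x - x₀‖ ^ 2) + 4 * ‖x - x₀‖ ^ 2 *
            (g'' (‖x - x₀‖ ^ 2) + g' (‖x - x₀‖ ^ 2) ^ 2 / g (‖x - x₀‖ ^ 2)))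
          * (if i = j then 1 else 0) := by
  have hpd := pd_comp_norm_sub_sq hg.self_of_nhds
  have hpd2 := pd2_comp_norm_sub_sq hg hg'
  have hlap : ∑ l, pd2 n (fun y => g (‖y - x₀‖ ^ 2)) x l l
      = 4 * g'' (‖x - x₀‖ ^ 2) * ‖x - x₀‖ ^ 2 + 2 * n * g' (‖x - x₀‖ ^ 2) := by
    simp only [hpd2, if_pos, Finset.sum_add_distrib, ← sum_sub_sq_eq_norm_sq x₀ x,
      Finset.mul_sum]
    simp only [Finset.sum_const, Finset.card_univ, Fintype.card_fin, nsmul_eq_mul]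
    ring_nf
  have hgrad : ∑ l, pd n (fun y => g (‖y - x₀‖ ^ 2)) x l ^ 2
      = 4 * g' (‖x - x₀‖ ^ 2) ^ 2 * ‖x - x₀‖ ^ 2 := by
    simp only [hpd, ← sum_sub_sq_eq_norm_sq x₀ x, Finset.mul_sum]
    ring_nf
  rw [Wmat, hlap, hgrad, hpd, hpd, hpd2]
  ring

end Radial

section ScalarMatrix

variable {n : ℕ}

lemma esymm_const (μ : ℝ) (j : ℕ) : esymm n j (fun _ => μ) = n.choose j * μ ^ j := by
  rw [esymm, Finset.sum_congr rfl fun s hs => by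
    rw [Finset.prod_const, (Finset.mem_powersetCard.mp hs).2]]
  simp

lemma isHermitian_smul_one (μ : ℝ) : (μ • (1 : Matrix (Fin n) (Fin n) ℝ)).IsHermitian := by
  simp [Matrix.IsHermitian]

lemma eigenvalues_smul_one (μ : ℝ) (i : Fin n) :
    (isHermitian_smul_one (n := n) μ).eigenvalues i = μ := by
  have : Nonempty (Fin n) := ⟨i⟩
  have hspec : spectrum ℝ (μ • (1 : Matrix (Fin n) (Fin n) ℝ)) = {μ} := by
    rw [← Algebra.algebraMap_eq_smul_one, spectrum.scalar_eq]
  exact hspec.subset ((isHermitian_smul_one μ).eigenvalues_mem_spectrum_real i)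

lemma sigmaM_smul_one (μ : ℝ) (j : ℕ) :
    sigmaM n j (μ • 1) = n.choose j * μ ^ j := by
  rw [sigmaM, dif_pos (isHermitian_smul_one μ), ← esymm_const]
  exact congrArg _ (funext (eigenvalues_smul_one μ))

lemma inGammaM_smul_one {k : ℕ} (hkn : k ≤ n) {μ : ℝ} (hμ : 0 < μ) :
    inGammaM n k (μ • 1) := fun j _ hjk => by
  rw [sigmaM_smul_one]
  have := Nat.choose_pos (hjk.trans hkn)
  positivity

end ScalarMatrix

lemma exists_pos_mul_pow_add_mul_pow_eq {A : ℝ} (hA : 0 < A) (B : ℝ) {k : ℕ} (hk : 2 ≤ k)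
    {a₀ : ℝ} (ha₀ : 0 < a₀) : ∃ μ > 0, A * μ ^ k + B * μ ^ (k - 1) = a₀ := by
  have hfactor : ∀ μ : ℝ, A * μ ^ k + B * μ ^ (k - 1) = μ ^ (k - 1) * (A * μ + B) := by
    intro μ
    obtain ⟨m, rfl⟩ : ∃ m, k = m + 1 := ⟨k - 1, by omega⟩
    simp only [Nat.add_sub_cancel, pow_succ]
    ring
  have htop : Tendsto (fun μ : ℝ => μ ^ (k - 1) * (A * μ + B)) atTop atTop :=
    (tendsto_pow_atTop (by omega)).atTop_mul_atTop₀
      (tendsto_atTop_add_const_right _ B (tendsto_id.const_mul_atTop hA))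
  obtain ⟨μ, hμ, hμeq⟩ := intermediate_value_Ioi (a := 0) (by fun_prop) htop
    (show a₀ ∈ Set.Ioi _ by simpa [zero_pow (by omega : k - 1 ≠ 0)] using ha₀)
  exact ⟨μ, hμ, (hfactor μ).trans hμeq⟩

section Profile

variable {n : ℕ} {x₀ x : Eucl n} {c ε t : ℝ}

lemma hasDerivAt_mul_affine_rpow (c ε t p : ℝ) {r : ℝ} (hr : 0 < ε * r + t) :
    HasDerivAt (fun r => c * (ε * r + t) ^ p) (c * ε * p * (ε * r + t) ^ (p - 1)) r := by
  have h := (((hasDerivAt_id r).const_mul ε).add_const t).rpow_const (p := p) (Or.inl hr.ne')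
  simpa [mul_assoc] using h.const_mul c

lemma Wmat_conformal_profile (hw : 0 < ε * ‖x - x₀‖ ^ 2 + t) :
    Wmat n (fun y => c * (ε * ‖y - x₀‖ ^ 2 + t) ^ (1 - (n : ℝ) / 2)) x
      = (2 * ((n : ℝ) - 2) * ((n : ℝ) - 1) * (-(ε * t)) * c
          * (ε * ‖x - x₀‖ ^ 2 + t) ^ (-(((n : ℝ) + 2) / 2))) • 1 := by
  set p : ℝ := 1 - (n : ℝ) / 2 with hp
  have hopen : IsOpen {r : ℝ | 0 < ε * r + t} := isOpen_lt continuous_const (by fun_prop)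
  have hg : ∀ᶠ r in 𝓝 (‖x - x₀‖ ^ 2), HasDerivAt (fun r => c * (ε * r + t) ^ p)
      (c * ε * p * (ε * r + t) ^ (p - 1)) r := by
    filter_upwards [hopen.mem_nhds hw] with r hr
    exact hasDerivAt_mul_affine_rpow c ε t p hr
  have hg' := hasDerivAt_mul_affine_rpow (c * ε * p) ε t (p - 1) hw
  ext i j
  rw [Wmat_comp_norm_sub_sq
    (g'' := fun r => c * ε * p * ε * (p - 1) * (ε * r + t) ^ (p - 1 - 1)) hg hg']
  set w := ε * ‖x - x₀‖ ^ 2 + t with hw_def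
  have h1 : w ^ (p - 1) = w ^ (p - 1 - 1) * w := by
    rw [← Real.rpow_add_one hw.ne']; ring_nf
  have h0 : w ^ p = w ^ (p - 1 - 1) * w ^ 2 := by
    rw [← Real.rpow_natCast, ← Real.rpow_add hw]; ring_nf
  have h2 : w ^ (-(((n : ℝ) + 2) / 2)) = w ^ (p - 1 - 1) := by rw [hp]; ring_nf
  have hA : 0 < w ^ (p - 1 - 1) := Real.rpow_pos_of_pos hw _
  simp only [h1, h0, h2, Matrix.smul_apply, Matrix.one_apply, smul_eq_mul]
  generalize w ^ (p - 1 - 1) = A at hA ⊢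
  have hkey : ((n : ℝ) - 2) * (p - 1) - n * p = 0 := by rw [hp]; ring
  rcases eq_or_ne c 0 with rfl | hc
  · simp
  split_ifs <;>
  · field_simp
    rw [hkey, hw_def, hp]
    ring

lemma Wscaled_conformal_profile (hn : 3 ≤ n) (hc : 0 < c) (hw : 0 < ε * ‖x - x₀‖ ^ 2 + t) :
    Wscaled n (fun y => c * (ε * ‖y - x₀‖ ^ 2 + t) ^ (1 - (n : ℝ) / 2)) x
      = (4 * ((n : ℝ) - 1) * (-(ε * t)) * c ^ (-(4 / ((n : ℝ) - 2)))) • 1 := by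
  have hn2 : (n : ℝ) - 2 ≠ 0 := by
    have : (3 : ℝ) ≤ n := by exact_mod_cast hn
    linarith
  set w := ε * ‖x - x₀‖ ^ 2 + t
  have hwpow : (w ^ (1 - (n : ℝ) / 2)) ^ (-(((n : ℝ) + 2) / ((n : ℝ) - 2)))
      * w ^ (-(((n : ℝ) + 2) / 2)) = 1 := by
    rw [← Real.rpow_mul hw.le, ← Real.rpow_add hw]
    convert Real.rpow_zero w using 2
    field_simp
    ring
  have hcpow : c ^ (-(((n : ℝ) + 2) / ((n : ℝ) - 2))) * c = c ^ (-(4 / ((n : ℝ) - 2))) := by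
    rw [← Real.rpow_add_one hc.ne']
    congr 1
    field_simp
    ring
  rw [Wscaled, Wmat_conformal_profile hw, smul_smul, Real.mul_rpow hc.le (by positivity)]
  congr 1
  calc 2 / ((n : ℝ) - 2) * (c ^ (-(((n : ℝ) + 2) / ((n : ℝ) - 2)))
          * (w ^ (1 - (n : ℝ) / 2)) ^ (-(((n : ℝ) + 2) / ((n : ℝ) - 2))))
        * (2 * ((n : ℝ) - 2) * ((n : ℝ) - 1) * (-(ε * t)) * c * w ^ (-(((n : ℝ) + 2) / 2)))
      = 4 * ((n : ℝ) - 1) * (-(ε * t)) * (c ^ (-(((n : ℝ) + 2) / ((n : ℝ) - 2))) * c)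
          * ((w ^ (1 - (n : ℝ) / 2)) ^ (-(((n : ℝ) + 2) / ((n : ℝ) - 2)))
            * w ^ (-(((n : ℝ) + 2) / 2))) := by
        field_simp
        ring
    _ = _ := by rw [hwpow, hcpow, mul_one]

lemma inGammaM_conformal_profile {k : ℕ} (hn : 3 ≤ n) (hkn : k ≤ n) (hc : 0 < c)
    (hεt : 0 < -(ε * t)) (hw : 0 < ε * ‖x - x₀‖ ^ 2 + t) :
    inGammaM n k (Wmat n (fun y => c * (ε * ‖y - x₀‖ ^ 2 + t) ^ (1 - (n : ℝ) / 2)) x) := by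
  have hn' : (3 : ℝ) ≤ n := by exact_mod_cast hn
  rw [Wmat_conformal_profile hw]
  refine inGammaM_smul_one hkn (mul_pos (mul_pos (mul_pos (mul_pos (mul_pos two_pos ?_) ?_)
    hεt) hc) (Real.rpow_pos_of_pos hw _)) <;> linarith

lemma eqGen_conformal_profile {k : ℕ} (hn : 3 ≤ n) (hc : 0 < c) (hw : 0 < ε * ‖x - x₀‖ ^ 2 + t)
    {a a₀ μ : ℝ} (hμ : 4 * ((n : ℝ) - 1) * (-(ε * t)) * c ^ (-(4 / ((n : ℝ) - 2))) = μ)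
    (hroot : n.choose k * μ ^ k + a * (n.choose (k - 1) * μ ^ (k - 1)) = a₀) :
    EqGen n k (fun _ => a) (fun _ => a₀)
      (fun y => c * (ε * ‖y - x₀‖ ^ 2 + t) ^ (1 - (n : ℝ) / 2)) x := by
  rw [EqGen, Wscaled_conformal_profile hn hc hw, hμ, sigmaM_smul_one, sigmaM_smul_one]
  exact hroot

end Profile

lemma mul_div_rpow_rpow_neg_inv {X μ q : ℝ} (hX : 0 < X) (hμ : 0 < μ) (hq : q ≠ 0) :
    X * ((X / μ) ^ q) ^ (-q⁻¹) = μ := by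
  rw [← Real.rpow_mul (div_pos hX hμ).le, mul_neg, mul_inv_cancel₀ hq, Real.rpow_neg_one,
    inv_div]
  field_simp

lemma exists_lt_mul_rpow_of_neg {c p : ℝ} (hc : 0 < c) (hp : p < 0) (C : ℝ) :
    ∃ δ > 0, ∀ w, 0 < w → w < δ → C < c * w ^ p := by
  have h := ((tendsto_rpow_neg_nhdsGT_zero hp).const_mul_atTop hc).eventually_gt_atTop C
  obtain ⟨δ, hδ, hsub⟩ := mem_nhdsGT_iff_exists_Ioo_subset.mp h
  exact ⟨δ, hδ, fun w hw hwδ => hsub ⟨hw, hwδ⟩⟩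

lemma exists_lt_mul_sq_sub_norm_sq_rpow {n : ℕ} {x₀ : Eucl n} {s c p : ℝ} (hs : 0 < s)
    (hc : 0 < c) (hp : p < 0) (C : ℝ) :
    ∃ δ > 0, ∀ x ∈ ball x₀ s, s - dist x x₀ < δ → C < c * (s ^ 2 - ‖x - x₀‖ ^ 2) ^ p := by
  obtain ⟨δ, hδ, h⟩ := exists_lt_mul_rpow_of_neg hc hp C
  refine ⟨δ / (2 * s), by positivity, fun x hx hclose => h _ ?_ ?_⟩
  all_goals
    rw [mem_ball, dist_eq_norm] at hx
    rw [dist_eq_norm] at hclose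
    have := norm_nonneg (x - x₀)
  · nlinarith
  · rw [lt_div_iff₀ (by positivity)] at hclose
    nlinarith

lemma exists_lt_mul_norm_sq_sub_sq_rpow {n : ℕ} {x₀ : Eucl n} {s c p : ℝ} (hs : 0 < s)
    (hc : 0 < c) (hp : p < 0) (C : ℝ) :
    ∃ δ > 0, ∀ x ∈ (closedBall x₀ s)ᶜ, dist x x₀ - s < δ →
      C < c * (‖x - x₀‖ ^ 2 - s ^ 2) ^ p := by
  obtain ⟨δ, hδ, h⟩ := exists_lt_mul_rpow_of_neg hc hp C
  refine ⟨min s (δ / (3 * s)), by positivity, fun x hx hclose => h _ ?_ ?_⟩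
  all_goals
    rw [Set.mem_compl_iff, mem_closedBall, not_le, dist_eq_norm] at hx
    rw [dist_eq_norm, lt_min_iff, lt_div_iff₀ (by positivity)] at hclose
  · nlinarith
  · nlinarith

section Solutions

variable {n k : ℕ} {x₀ : Eucl n} {a a₀ μ s : ℝ}

def conformalConst (n : ℕ) (s μ : ℝ) : ℝ := (4 * ((n : ℝ) - 1) * s ^ 2 / μ) ^ (((n : ℝ) - 2) / 4)

lemma conformalConst_pos (hn : 3 ≤ n) (hs : 0 < s) (hμ : 0 < μ) : 0 < conformalConst n s μ := by
  have hn' : (3 : ℝ) ≤ n := by exact_mod_cast hn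
  exact Real.rpow_pos_of_pos (div_pos (by nlinarith) hμ) _

lemma conformal_profile_solves (hn : 3 ≤ n) (hkn : k ≤ n) (hs : 0 < s) (hμ : 0 < μ)
    (hroot : n.choose k * μ ^ k + a * (n.choose (k - 1) * μ ^ (k - 1)) = a₀)
    {ε t : ℝ} (hεt : ε * t = -s ^ 2) {x : Eucl n} (hw : 0 < ε * ‖x - x₀‖ ^ 2 + t) :
    inGammaM n k (Wmat n
        (fun y => conformalConst n s μ * (ε * ‖y - x₀‖ ^ 2 + t) ^ (1 - (n : ℝ) / 2)) x) ∧
      EqGen n k (fun _ => a) (fun _ => a₀)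
        (fun y => conformalConst n s μ * (ε * ‖y - x₀‖ ^ 2 + t) ^ (1 - (n : ℝ) / 2)) x := by
  have hn' : (3 : ℝ) ≤ n := by exact_mod_cast hn
  have hκ : 0 < -(ε * t) := by rw [hεt, neg_neg]; positivity
  have hc := conformalConst_pos hn hs hμ
  have hcμ : 4 * ((n : ℝ) - 1) * (-(ε * t)) * conformalConst n s μ ^ (-(4 / ((n : ℝ) - 2)))
      = μ := by
    rw [hεt, neg_neg, ← inv_div, conformalConst]
    exact mul_div_rpow_rpow_neg_inv (by nlinarith) hμ (by linarith)
  exact ⟨inGammaM_conformal_profile hn hkn hc hκ hw, eqGen_conformal_profile hn hc hw hcμ hroot⟩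

lemma exists_ball_solution (hn : 3 ≤ n) (hkn : k ≤ n) (hs : 0 < s) (hμ : 0 < μ)
    (hroot : n.choose k * μ ^ k + a * (n.choose (k - 1) * μ ^ (k - 1)) = a₀) :
    ∃ c > (0 : ℝ), ∀ u : Eucl n → ℝ,
      (∀ x, u x = c * (s ^ 2 - ‖x - x₀‖ ^ 2) ^ (1 - (n : ℝ) / 2)) →
      (∀ x ∈ Metric.ball x₀ s, 0 < u x) ∧
      Admissible n k (Metric.ball x₀ s) u ∧
      (∀ x ∈ Metric.ball x₀ s, EqGen n k (fun _ => a) (fun _ => a₀) u x) ∧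
      (∀ C : ℝ, ∃ δ > (0 : ℝ), ∀ x ∈ Metric.ball x₀ s, s - dist x x₀ < δ → C < u x) := by
  have hn' : (3 : ℝ) ≤ n := by exact_mod_cast hn
  have hp : 1 - (n : ℝ) / 2 < 0 := by linarith
  have hc := conformalConst_pos hn hs hμ
  refine ⟨conformalConst n s μ, hc, fun u hu => ?_⟩
  have hw : ∀ x ∈ ball x₀ s, 0 < (-1) * ‖x - x₀‖ ^ 2 + s ^ 2 := fun x hx => by
    rw [mem_ball, dist_eq_norm] at hx
    nlinarith [norm_nonneg (x - x₀)]
  have hu' : u = fun y =>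
      conformalConst n s μ * ((-1) * ‖y - x₀‖ ^ 2 + s ^ 2) ^ (1 - (n : ℝ) / 2) := by
    funext y; rw [hu]; ring_nf
  have hsolves := fun x hx => conformal_profile_solves (x₀ := x₀) hn hkn hs hμ hroot
    (ε := -1) (t := s ^ 2) (by ring) (hw x hx)
  refine ⟨fun x hx => ?_, fun x hx => hu' ▸ (hsolves x hx).1,
    fun x hx => hu' ▸ (hsolves x hx).2, fun C => ?_⟩
  · rw [hu']; exact mul_pos hc (Real.rpow_pos_of_pos (hw x hx) _)
  · simpa only [hu] using exists_lt_mul_sq_sub_norm_sq_rpow hs hc hp C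

lemma exists_exterior_solution (hn : 3 ≤ n) (hkn : k ≤ n) (hs : 0 < s) (hμ : 0 < μ)
    (hroot : n.choose k * μ ^ k + a * (n.choose (k - 1) * μ ^ (k - 1)) = a₀) :
    ∃ c > (0 : ℝ), ∀ v : Eucl n → ℝ,
      (∀ x, v x = c * (‖x - x₀‖ ^ 2 - s ^ 2) ^ (1 - (n : ℝ) / 2)) →
      (∀ x ∈ (Metric.closedBall x₀ s)ᶜ, 0 < v x) ∧
      Admissible n k (Metric.closedBall x₀ s)ᶜ v ∧
      (∀ x ∈ (Metric.closedBall x₀ s)ᶜ, EqGen n k (fun _ => a) (fun _ => a₀) v x) ∧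
      (∀ C : ℝ, ∃ δ > (0 : ℝ), ∀ x ∈ (Metric.closedBall x₀ s)ᶜ,
        dist x x₀ - s < δ → C < v x) := by
  have hn' : (3 : ℝ) ≤ n := by exact_mod_cast hn
  have hp : 1 - (n : ℝ) / 2 < 0 := by linarith
  have hc := conformalConst_pos hn hs hμ
  refine ⟨conformalConst n s μ, hc, fun v hv => ?_⟩
  have hw : ∀ x ∈ (closedBall x₀ s)ᶜ, 0 < 1 * ‖x - x₀‖ ^ 2 + (-s ^ 2) := fun x hx => by
    rw [Set.mem_compl_iff, mem_closedBall, not_le, dist_eq_norm] at hx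
    nlinarith
  have hv' : v = fun y =>
      conformalConst n s μ * (1 * ‖y - x₀‖ ^ 2 + (-s ^ 2)) ^ (1 - (n : ℝ) / 2) := by
    funext y; rw [hv]; ring_nf
  have hsolves := fun x hx => conformal_profile_solves (x₀ := x₀) hn hkn hs hμ hroot
    (ε := 1) (t := -s ^ 2) (by ring) (hw x hx)
  refine ⟨fun x hx => ?_, fun x hx => hv' ▸ (hsolves x hx).1,
    fun x hx => hv' ▸ (hsolves x hx).2, fun C => ?_⟩
  · rw [hv']; exact mul_pos hc (Real.rpow_pos_of_pos (hw x hx) _)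
  · simpa only [hv] using exists_lt_mul_norm_sq_sub_sq_rpow hs hc hp C

end Solutions

/-- Explicit radial solutions of the general equation (**) with constant
coefficients on a ball and on the exterior of a ball, blowing up at the sphere. -/
theorem stmt19 (n k : ℕ) (hn : 3 ≤ n) (hk : 2 ≤ k) (hkn : k ≤ n)
    (a a₀ : ℝ) (ha₀ : 0 < a₀) (x₀ : Eucl n) (s : ℝ) (hs : 0 < s) :
    (∃ c > (0 : ℝ), ∀ u : Eucl n → ℝ,
      (∀ x, u x = c * (s ^ 2 - ‖x - x₀‖ ^ 2) ^ (1 - (n : ℝ) / 2)) →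
      (∀ x ∈ Metric.ball x₀ s, 0 < u x) ∧
      Admissible n k (Metric.ball x₀ s) u ∧
      (∀ x ∈ Metric.ball x₀ s, EqGen n k (fun _ => a) (fun _ => a₀) u x) ∧
      (∀ C : ℝ, ∃ δ > (0 : ℝ), ∀ x ∈ Metric.ball x₀ s, s - dist x x₀ < δ → C < u x)) ∧
    (∃ c > (0 : ℝ), ∀ v : Eucl n → ℝ,
      (∀ x, v x = c * (‖x - x₀‖ ^ 2 - s ^ 2) ^ (1 - (n : ℝ) / 2)) →
      (∀ x ∈ (Metric.closedBall x₀ s)ᶜ, 0 < v x) ∧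
      Admissible n k (Metric.closedBall x₀ s)ᶜ v ∧
      (∀ x ∈ (Metric.closedBall x₀ s)ᶜ, EqGen n k (fun _ => a) (fun _ => a₀) v x) ∧
      (∀ C : ℝ, ∃ δ > (0 : ℝ), ∀ x ∈ (Metric.closedBall x₀ s)ᶜ,
        dist x x₀ - s < δ → C < v x)) := by
  obtain ⟨μ, hμ, hroot⟩ := exists_pos_mul_pow_add_mul_pow_eq
    (A := n.choose k) (by exact_mod_cast Nat.choose_pos hkn) (a * n.choose (k - 1)) hk ha₀
  have hroot' : n.choose k * μ ^ k + a * (n.choose (k - 1) * μ ^ (k - 1)) = a₀ := by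
    linear_combination hroot
  exact ⟨exists_ball_solution hn hkn hs hμ hroot', exists_exterior_solution hn hkn hs hμ hroot'⟩
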